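/- arXiv:2112.07810 — 2 statements merged into one kernel-verified Lean document; each statement's English description precedes it below -/
import Mathlib

section
/- Let T be a perfect unit-length tree with n leaves and let k be a positive integer with k ≤ n/2. Then m(T,k) ≤ m(T,n−k), i.e., there are at least as many size-(n−k) maxPD sets of T as size-k maxPD sets. Moreover, if A is a size-k maxPD set of T with k ≤ n/2, then X − A is a size-(n−k) maxPD set of T. -/
/-!
Rooted phylogenetic `X`-trees with positive edge lengths.

A tree on a finite vertex type `V` is encoded by its parent function: the root
has no parent, every other vertex has one, and iterating the parent function
reaches the root.  The edge into a non-root vertex `v` has length `len v`, and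
`hgt v` is the distance from the root to `v`.  Leaves are the vertices with no
children; the taxon set `X` of the paper is the set `leaves` of leaves.
Every non-leaf, non-root vertex has out-degree (number of children) at least 2.
-/

noncomputable section

attribute [local instance] Classical.propDecidable

structure PhyloTree (V : Type) [Fintype V] [DecidableEq V] where
  root : V
  parent : V → Option V
  len : V → ℝ
  hgt : V → ℝ
  parent_root : parent root = none
  parent_isSome : ∀ v, v ≠ root → (parent v).isSome
  reaches_root : ∀ v, Relation.ReflTransGen (fun a b => parent a = some b) v root
  hgt_root : hgt root = 0
  hgt_eq : ∀ v u, parent v = some u → hgt v = hgt u + len v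
  len_pos : ∀ v, v ≠ root → 0 < len v
  outdeg_ge_two : ∀ v, v ≠ root → (∃ u, parent u = some v) →
    2 ≤ Set.ncard {u | parent u = some v}

namespace PhyloTree

variable {V : Type} [Fintype V] [DecidableEq V]

/-- `T.step a b` : `b` is the parent of `a`. -/
def step (T : PhyloTree V) (a b : V) : Prop := T.parent a = some b

/-- `T.anc u v` : `u` is an ancestor of `v`, i.e. `u` lies on the (unique) path
from the root to `v` (reflexively). -/
def anc (T : PhyloTree V) (u v : V) : Prop := Relation.ReflTransGen T.step v u

/-- a leaf is a vertex with no children. -/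
def IsLeaf (T : PhyloTree V) (v : V) : Prop := ∀ u, T.parent u ≠ some v

/-- the leaf set (the taxon set `X`). -/
def leaves (T : PhyloTree V) : Set V := {v | T.IsLeaf v}

/-- Phylogenetic diversity of a set `Y`: the total length of all edges `e`
whose set of descendant leaves meets `Y` (the edge into a non-root vertex `v`
has length `T.len v`). -/
def PD (T : PhyloTree V) (Y : Set V) : ℝ :=
  ∑ v : V, if v ≠ T.root ∧ ∃ x ∈ Y, T.IsLeaf x ∧ T.anc v x then T.len v else 0

/-- the ultrametric condition: all leaves are at the same distance from the root. -/
def Ultrametric (T : PhyloTree V) : Prop :=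
  ∀ x y, T.IsLeaf x → T.IsLeaf y → T.hgt x = T.hgt y

/-- `R d`: the set of vertices within distance `d` above some leaf. -/
def R (T : PhyloTree V) (d : ℝ) : Set V :=
  {v | ∃ x, T.IsLeaf x ∧ T.anc v x ∧ T.hgt x - T.hgt v ≤ d}

/-- adjacency in the forest induced by `T` on a vertex set `S`. -/
def adjIn (T : PhyloTree V) (S : Set V) (u v : V) : Prop :=
  u ∈ S ∧ v ∈ S ∧ (T.parent u = some v ∨ T.parent v = some u)

/-- the connected components of the forest induced by `T` on `S`. -/
def components (T : PhyloTree V) (S : Set V) : Set (Set V) :=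
  {C | ∃ v ∈ S, C = S ∩ {u | Relation.ReflTransGen (T.adjIn S) v u}}

/-- `c d`: the number of connected components of the forest `T[R(d)]`. -/
def ccount (T : PhyloTree V) (d : ℝ) : ℕ := (T.components (T.R d)).ncard

/-- `k` is a branching value if `T[R(d)]` has exactly `k` components for some `d ≥ 0`. -/
def IsBranchingValue (T : PhyloTree V) (k : ℕ) : Prop := ∃ d : ℝ, 0 ≤ d ∧ T.ccount d = k

/-- the branching distance `d_k = min {d : c(d) = k}`. -/
def branchDist (T : PhyloTree V) (k : ℕ) : ℝ := sInf {d | 0 ≤ d ∧ T.ccount d = k}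

/-- `k⁻`: the largest branching value `≤ k`. -/
def kminus (T : PhyloTree V) (k : ℕ) : ℕ := sSup {j | j ≤ k ∧ T.IsBranchingValue j}

/-- `k⁺`: the smallest branching value `≥ k`. -/
def kplus (T : PhyloTree V) (k : ℕ) : ℕ := sInf {j | k ≤ j ∧ T.IsBranchingValue j}

/-- `A` is a size-`k` maxPD set. -/
def IsMaxPD (T : PhyloTree V) (k : ℕ) (A : Set V) : Prop :=
  A ⊆ T.leaves ∧ A.ncard = k ∧ ∀ Y ⊆ T.leaves, Y.ncard = k → T.PD Y ≤ T.PD A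

/-- `A` is a size-`k` minPD set. -/
def IsMinPD (T : PhyloTree V) (k : ℕ) (A : Set V) : Prop :=
  A ⊆ T.leaves ∧ A.ncard = k ∧ ∀ Y ⊆ T.leaves, Y.ncard = k → T.PD A ≤ T.PD Y

/-- `m T k`: the number of size-`k` maxPD sets of `T`. -/
def m (T : PhyloTree V) (k : ℕ) : ℕ := {A : Set V | T.IsMaxPD k A}.ncard

/-- `T` is binary: every non-leaf vertex has exactly two children. -/
def Binary (T : PhyloTree V) : Prop :=
  ∀ v, ¬ T.IsLeaf v → Set.ncard {u | T.parent u = some v} = 2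

end PhyloTree

namespace PhyloTree

variable {V : Type} [Fintype V] [DecidableEq V]

/-- a perfect unit-length tree of height `α`: a rooted binary phylogenetic tree
in which every edge has length `1` and every root-to-leaf path has exactly `α`
edges (so every leaf is at distance `α` from the root). -/
def PerfectUnitLength (T : PhyloTree V) (α : ℕ) : Prop :=
  T.Binary ∧ (∀ v, v ≠ T.root → T.len v = 1) ∧ ∀ x, T.IsLeaf x → T.hgt x = (α : ℝ)

end PhyloTree

/-!
Identify each edge with its lower endpoint. With unit lengths, `PD Y` is the number of edges of
the subtree spanning `Y` and the root; every such edge ending in a leaf ends in `Y`, so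
`PD Z ≤ #(non-root vertices) - #(X \ Z)`, and `X \ A` attains this bound as soon as every
internal non-root vertex has a leaf below it outside `A`.

In a perfect tree every internal vertex lies above a cherry, so this holds whenever `A` contains
no two siblings. A size-`k` maxPD set `A` with `2k ≤ n` has this property: if `x, y ∈ A` were
siblings, `A` would meet fewer than `k ≤ n/2` of the `n/2` cherries, and replacing `y` by a leaf
of a cherry `q` missed by `A` loses at most the edge into `y` but gains the two edges into that
leaf and into `q`. Taking complements is injective, which gives `m(T,k) ≤ m(T,n-k)`.
-/

namespace PhyloTree

variable {V : Type} [Fintype V] [DecidableEq V] (T : PhyloTree V)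

lemma ne_root_of_parent_eq_some {u p : V} (h : T.parent u = some p) : u ≠ T.root := by
  rintro rfl
  simp [T.parent_root] at h

lemma hgt_lt_hgt_of_parent_eq_some {u p : V} (h : T.parent u = some p) :
    T.hgt p < T.hgt u := by
  have := T.len_pos u (T.ne_root_of_parent_eq_some h)
  rw [T.hgt_eq u p h]
  linarith

lemma eq_or_hgt_lt_of_anc {u v : V} (h : T.anc u v) : u = v ∨ T.hgt u < T.hgt v := by
  induction h using Relation.ReflTransGen.head_induction_on with
  | refl => exact Or.inl rfl
  | head hstep _ ih =>
    have := T.hgt_lt_hgt_of_parent_eq_some hstep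
    right
    rcases ih with rfl | h <;> linarith

lemma exists_parent_eq_some_anc_of_anc {v u : V} (h : T.anc v u) (hne : v ≠ u) :
    ∃ p, T.parent u = some p ∧ T.anc v p := by
  rcases h.cases_head with h | h
  · exact absurd h.symm hne
  · exact h

lemma exists_isLeaf_anc (v : V) : ∃ x, T.IsLeaf x ∧ T.anc v x := by
  obtain ⟨x, hx, hmax⟩ := (Finset.univ.filter (T.anc v)).exists_max_image T.hgt
    ⟨v, Finset.mem_filter.mpr ⟨Finset.mem_univ _, Relation.ReflTransGen.refl⟩⟩
  simp only [Finset.mem_filter, Finset.mem_univ, true_and] at hx hmax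
  exact ⟨x, fun u hu => (hmax u (Relation.ReflTransGen.head hu hx)).not_gt
    (T.hgt_lt_hgt_of_parent_eq_some hu), hx⟩

lemma IsLeaf.eq_of_anc {T : PhyloTree V} {z w : V} (hz : T.IsLeaf z) (h : T.anc z w) :
    w = z := by
  rcases h.cases_tail with h | ⟨c, -, hc⟩
  · exact h.symm
  · exact absurd hc (hz c)

lemma root_not_isLeaf (h : 2 ≤ T.leaves.ncard) : ¬ T.IsLeaf T.root := by
  intro hroot
  have hsub : T.leaves ⊆ {T.root} := by
    intro x _
    rcases (T.reaches_root x).cases_tail with h | ⟨c, -, hc⟩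
    · exact h.symm
    · exact absurd hc (hroot c)
  have := Set.ncard_le_ncard hsub
  rw [Set.ncard_singleton] at this
  omega

lemma Binary.ncard_leaves_le_two_mul {T : PhyloTree V} (hT : T.Binary) :
    T.leaves.ncard ≤ 2 * (T.parent '' T.leaves).ncard := by
  rw [Set.ncard_eq_toFinset_card', Set.ncard_eq_toFinset_card', Set.toFinset_image]
  refine Finset.card_le_mul_card_image _ 2 fun o ho => ?_
  obtain ⟨x, hx, rfl⟩ := Finset.mem_image.mp ho
  rw [← Set.ncard_coe_finset]
  cases hxp : T.parent x with
  | none =>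
    refine (Set.ncard_le_ncard (t := {T.root}) fun u hu => ?_).trans (by simp)
    by_contra hur
    simpa [(Finset.mem_filter.mp hu).2] using T.parent_isSome u hur
  | some p =>
    refine (Set.ncard_le_ncard (t := {u | T.parent u = some p}) fun u hu => ?_).trans
      (hT p fun h => h x hxp).le
    exact (Finset.mem_filter.mp hu).2

-- Edges are represented by their lower endpoints: `spanEdges Y` is the edge set of the subtree
-- spanning `Y` and the root.
def spanEdges (Y : Set V) : Set V := {v | v ≠ T.root ∧ ∃ x ∈ Y, T.IsLeaf x ∧ T.anc v x}

lemma PD_eq_ncard_spanEdges (hlen : ∀ v, v ≠ T.root → T.len v = 1) (Y : Set V) :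
    T.PD Y = (T.spanEdges Y).ncard := by
  have hfin : T.spanEdges Y = ↑(Finset.univ.filter (· ∈ T.spanEdges Y)) := by simp
  rw [PD, ← Finset.sum_filter, hfin, Set.ncard_coe_finset, Finset.card_eq_sum_ones, Nat.cast_sum]
  exact Finset.sum_congr (Finset.filter_congr fun _ _ => Iff.rfl) fun v hv => by
    simpa using hlen v (Finset.mem_filter.mp hv).2.1

lemma ncard_spanEdges_add_ncard_leaves_diff_le (hroot : ¬ T.IsLeaf T.root) (Z : Set V) :
    (T.spanEdges Z).ncard + (T.leaves \ Z).ncard ≤ ({T.root}ᶜ : Set V).ncard := by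
  rw [← Set.ncard_union_eq]
  · refine Set.ncard_le_ncard (Set.union_subset (fun v hv => hv.1) ?_)
    rintro v ⟨hv, -⟩ rfl
    exact hroot hv
  · rw [Set.disjoint_left]
    rintro v ⟨-, w, hwZ, -, hvw⟩ ⟨hv, hvZ⟩
    exact hvZ (hv.eq_of_anc hvw ▸ hwZ)

lemma ncard_compl_root_le {A B : Set V}
    (hB : ∀ v, v ≠ T.root → v ∉ A → v ∈ T.spanEdges B) :
    ({T.root}ᶜ : Set V).ncard ≤ (T.spanEdges B).ncard + A.ncard := by
  refine (Set.ncard_le_ncard fun v (hv : v ≠ T.root) => ?_).trans (Set.ncard_union_le _ _)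
  by_cases hvA : v ∈ A
  · exact Or.inr hvA
  · exact Or.inl (hB v hv hvA)

lemma ncard_spanEdges_lt_of_exchange {A : Set V} (hA : A ⊆ T.leaves) {x y z p q : V}
    (hxA : x ∈ A) (hyA : y ∈ A) (hxy : x ≠ y) (hxp : T.parent x = some p)
    (hyp : T.parent y = some p) (hz : T.IsLeaf z) (hzq : T.parent z = some q)
    (hq : q ≠ T.root) (hqA : q ∉ T.spanEdges A) :
    (T.spanEdges A).ncard < (T.spanEdges (insert z (A \ {y}))).ncard := by
  have hzA : z ∉ T.spanEdges A := by
    rintro ⟨-, w, hwA, hw, hzw⟩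
    exact hqA ⟨hq, w, hwA, hw, hzw.tail hzq⟩
  have hyA' : y ∈ T.spanEdges A :=
    ⟨T.ne_root_of_parent_eq_some hyp, y, hyA, hA hyA, Relation.ReflTransGen.refl⟩
  have hqz : q ≠ z := by
    rintro rfl
    exact hz q hzq
  have hsub : insert q (insert z (T.spanEdges A \ {y})) ⊆ T.spanEdges (insert z (A \ {y})) := by
    rintro v (rfl | rfl | ⟨⟨hv, w, hwA, hw, hvw⟩, hvy⟩)
    · exact ⟨hq, z, Set.mem_insert _ _, hz, Relation.ReflTransGen.single hzq⟩
    · exact ⟨T.ne_root_of_parent_eq_some hzq, v, Set.mem_insert _ _, hz,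
        Relation.ReflTransGen.refl⟩
    · by_cases hwy : w = y
      · subst hwy
        obtain ⟨p', hyp', hvp⟩ := T.exists_parent_eq_some_anc_of_anc hvw hvy
        rw [hyp, Option.some_inj] at hyp'
        subst hyp'
        exact ⟨hv, x, Set.mem_insert_of_mem _ ⟨hxA, hxy⟩, hA hxA,
          Relation.ReflTransGen.head hxp hvp⟩
      · exact ⟨hv, w, Set.mem_insert_of_mem _ ⟨hwA, hwy⟩, hw, hvw⟩
  calc (T.spanEdges A).ncard < (T.spanEdges A \ {y}).ncard + 2 := by
        rw [← Set.ncard_sdiff_singleton_add_one hyA']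
        omega
    _ = (insert q (insert z (T.spanEdges A \ {y}))).ncard := by
        rw [Set.ncard_insert_of_notMem, Set.ncard_insert_of_notMem]
        · exact fun h => hzA h.1
        · rintro (h | h)
          · exact hqz h
          · exact hqA h.1
    _ ≤ _ := Set.ncard_le_ncard hsub

namespace PerfectUnitLength

variable {T} {α : ℕ}

lemma hgt_eq_hgt_add_one (hT : T.PerfectUnitLength α) {u p : V} (h : T.parent u = some p) :
    T.hgt u = T.hgt p + 1 := by
  rw [T.hgt_eq u p h, hT.2.1 u (T.ne_root_of_parent_eq_some h)]

lemma parent_eq_of_isLeaf_of_anc (hT : T.PerfectUnitLength α) {x p w : V} (hx : T.IsLeaf x)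
    (hxp : T.parent x = some p) (hw : T.IsLeaf w) (hpw : T.anc p w) : T.parent w = some p := by
  have hne : p ≠ w := by
    rintro rfl
    exact hw x hxp
  obtain ⟨c, hwc, hpc⟩ := T.exists_parent_eq_some_anc_of_anc hpw hne
  rcases T.eq_or_hgt_lt_of_anc hpc with rfl | hlt
  · exact hwc
  · linarith [hT.hgt_eq_hgt_add_one hwc, hT.hgt_eq_hgt_add_one hxp, hT.2.2 w hw, hT.2.2 x hx]

lemma isLeaf_of_parent_eq_some (hT : T.PerfectUnitLength α) {x p u : V} (hx : T.IsLeaf x)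
    (hxp : T.parent x = some p) (hup : T.parent u = some p) : T.IsLeaf u := by
  obtain ⟨w, hw, huw⟩ := T.exists_isLeaf_anc u
  rcases T.eq_or_hgt_lt_of_anc huw with rfl | hlt
  · exact hw
  · linarith [hT.hgt_eq_hgt_add_one hup, hT.hgt_eq_hgt_add_one hxp, hT.2.2 w hw, hT.2.2 x hx]

lemma ne_root_of_isLeaf_of_parent_eq_some (hT : T.PerfectUnitLength α) (h : 2 < T.leaves.ncard)
    {z p : V} (hz : T.IsLeaf z) (hzp : T.parent z = some p) : p ≠ T.root := by
  rintro rfl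
  have hsub : T.leaves ⊆ {u | T.parent u = some T.root} := fun w hw =>
    hT.parent_eq_of_isLeaf_of_anc hz hzp hw (T.reaches_root w)
  have := Set.ncard_le_ncard hsub
  rw [hT.1 T.root fun h => h z hzp] at this
  omega

lemma exists_isLeaf_anc_notMem (hT : T.PerfectUnitLength α) {A : Set V}
    (hA : Set.InjOn T.parent A) {v : V} (hv : ¬ T.IsLeaf v) :
    ∃ x, T.IsLeaf x ∧ T.anc v x ∧ x ∉ A := by
  obtain ⟨x, hx, hvx⟩ := T.exists_isLeaf_anc v
  obtain ⟨p, hxp, hvp⟩ := T.exists_parent_eq_some_anc_of_anc hvx fun h => hv (h ▸ hx)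
  obtain ⟨c₁, c₂, hne, hc⟩ := Set.ncard_eq_two.mp (hT.1 p fun h => h x hxp)
  have hc₁ : T.parent c₁ = some p := show c₁ ∈ {u | T.parent u = some p} by
    rw [hc]; exact Set.mem_insert _ _
  have hc₂ : T.parent c₂ = some p := show c₂ ∈ {u | T.parent u = some p} by
    rw [hc]; exact Set.mem_insert_of_mem _ rfl
  by_cases h₁ : c₁ ∈ A
  · exact ⟨c₂, hT.isLeaf_of_parent_eq_some hx hxp hc₂, Relation.ReflTransGen.head hc₂ hvp,
      fun h₂ => hne (hA h₁ h₂ (hc₁.trans hc₂.symm))⟩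
  · exact ⟨c₁, hT.isLeaf_of_parent_eq_some hx hxp hc₁, Relation.ReflTransGen.head hc₁ hvp,
      h₁⟩

lemma isMaxPD_leaves_diff (hT : T.PerfectUnitLength α) (hroot : ¬ T.IsLeaf T.root) {A : Set V}
    (hAL : A ⊆ T.leaves) (hA : Set.InjOn T.parent A) :
    T.IsMaxPD (T.leaves.ncard - A.ncard) (T.leaves \ A) := by
  refine ⟨Set.sdiff_subset, Set.ncard_sdiff hAL, fun Z hZ hZc => ?_⟩
  have hZ' : (T.leaves \ Z).ncard = A.ncard := by
    have := Set.ncard_le_ncard hAL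
    rw [Set.ncard_sdiff hZ, hZc]
    omega
  have hle := T.ncard_spanEdges_add_ncard_leaves_diff_le hroot Z
  have hge := T.ncard_compl_root_le (A := A) (B := T.leaves \ A) fun v hv hvA => by
    by_cases hvl : T.IsLeaf v
    · exact ⟨hv, v, ⟨hvl, hvA⟩, hvl, Relation.ReflTransGen.refl⟩
    · obtain ⟨x, hx, hvx, hxA⟩ := hT.exists_isLeaf_anc_notMem hA hvl
      exact ⟨hv, x, ⟨hx, hxA⟩, hx, hvx⟩
  rw [T.PD_eq_ncard_spanEdges hT.2.1, T.PD_eq_ncard_spanEdges hT.2.1]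
  exact_mod_cast (by omega : (T.spanEdges Z).ncard ≤ (T.spanEdges (T.leaves \ A)).ncard)

lemma injOn_parent_of_isMaxPD (hT : T.PerfectUnitLength α) {k : ℕ}
    (hk : 2 * k ≤ T.leaves.ncard) {A : Set V} (hA : T.IsMaxPD k A) : Set.InjOn T.parent A := by
  obtain ⟨hAL, hAk, hAmax⟩ := hA
  by_contra hinj
  obtain ⟨x, hxA, y, hyA, hxy_parent, hxy⟩ :
      ∃ x ∈ A, ∃ y ∈ A, T.parent x = T.parent y ∧ x ≠ y := by
    simpa [Set.InjOn] using hinj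
  have hk_two : 2 ≤ k :=
    hAk ▸ (Set.one_lt_ncard_iff (Set.toFinite _)).mpr ⟨x, y, hxA, hyA, hxy⟩
  have hroot := T.root_not_isLeaf (by omega)
  obtain ⟨p, hxp⟩ := Option.isSome_iff_exists.mp
    (T.parent_isSome x fun h => hroot (h ▸ hAL hxA))
  obtain ⟨_, ⟨z, hz, rfl⟩, hzA⟩ :=
      Set.not_subset.mp fun hsub : T.parent '' T.leaves ⊆ T.parent '' A => by
    have h₁ := Set.ncard_le_ncard hsub
    have h₂ : (T.parent '' A).ncard < A.ncard :=
      (Set.ncard_image_le (Set.toFinite _)).lt_of_ne fun h =>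
        hinj (Set.injOn_of_ncard_image_eq h)
    have h₃ := hT.1.ncard_leaves_le_two_mul
    omega
  obtain ⟨q, hzq⟩ := Option.isSome_iff_exists.mp (T.parent_isSome z fun h => hroot (h ▸ hz))
  have hqA : q ∉ T.spanEdges A := by
    rintro ⟨-, w, hwA, hw, hqw⟩
    exact hzA ⟨w, hwA, (hT.parent_eq_of_isLeaf_of_anc hz hzq hw hqw).trans hzq.symm⟩
  have hlt := T.ncard_spanEdges_lt_of_exchange hAL hxA hyA hxy hxp (hxy_parent ▸ hxp) hz hzq
    (hT.ne_root_of_isLeaf_of_parent_eq_some (by omega) hz hzq) hqA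
  have hzA' : z ∉ A := fun h => hzA ⟨z, h, rfl⟩
  have hle := hAmax (insert z (A \ {y}))
    (Set.insert_subset hz (Set.sdiff_subset.trans hAL))
    (by rw [Set.ncard_insert_of_notMem fun h => hzA' h.1, Set.ncard_sdiff_singleton_of_mem hyA]
        omega)
  rw [T.PD_eq_ncard_spanEdges hT.2.1, T.PD_eq_ncard_spanEdges hT.2.1] at hle
  exact absurd (by exact_mod_cast hle) hlt.not_ge

end PerfectUnitLength

end PhyloTree

/-- For a perfect unit-length tree on `n` leaves and
`k ≤ n/2`, there are at least as many size-`(n−k)` maxPD sets as size-`k`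
maxPD sets; moreover the complement (within the leaf set `X`) of any size-`k`
maxPD set is a size-`(n−k)` maxPD set. -/
theorem m_le_m_complement_perfect_unit_length
    {V : Type} [Fintype V] [DecidableEq V] (T : PhyloTree V)
    (α : ℕ) (hT : T.PerfectUnitLength α) (n k : ℕ)
    (hn : T.leaves.ncard = n) (hk : 1 ≤ k) (hk2 : 2 * k ≤ n) :
    T.m k ≤ T.m (n - k) ∧
    ∀ A : Set V, T.IsMaxPD k A → T.IsMaxPD (n - k) (T.leaves \ A) := by
  have hroot := T.root_not_isLeaf (by omega)
  have hcompl : ∀ A : Set V, T.IsMaxPD k A → T.IsMaxPD (n - k) (T.leaves \ A) := by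
    intro A hA
    have := hT.isMaxPD_leaves_diff hroot hA.1 (hT.injOn_parent_of_isMaxPD (hn ▸ hk2) hA)
    rwa [hn, hA.2.1] at this
  refine ⟨Set.ncard_le_ncard_of_injOn (T.leaves \ ·) hcompl ?_ (Set.toFinite _), hcompl⟩
  intro A hA B hB h
  rw [← Set.sdiff_sdiff_cancel_left hA.1, ← Set.sdiff_sdiff_cancel_left hB.1]
  exact congrArg (T.leaves \ ·) h
end
end

section
/- Let T be a rooted phylogenetic X-tree with positive edge lengths whose root has out-degree t, let e₁,…,e_t be the edges incident with the root, of lengths ℓ₁,…,ℓ_t, and let T₁,…,T_t be the maximal pendant subtrees below these edges. Define φ_T(k) = min{ PD_T(W) : W ⊆ X, |W| = k } for 1 ≤ k ≤ |X|, with φ_T(0) = 0 and φ_T(k) = 0 when T is a single vertex. Then for all k ∈ {1,…,|X|}: φ_T(k) = min over t-tuples (k₁,…,k_t) of non-negative integers with k₁ + ⋯ + k_t = k of Σ_{i=1}^{t} [ φ_{T_i}(k_i) + ℓ_i·𝟙_{k_i>0} ], where 𝟙_{k_i>0} equals 1 if k_i > 0 and 0 otherwise. -/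
/-!
Rooted phylogenetic `X`-trees with positive edge lengths.

A tree on a finite vertex type `V` is encoded by its parent function: the root
has no parent, every other vertex has one, and iterating the parent function
reaches the root.  The edge into a non-root vertex `v` has length `len v`, and
`hgt v` is the distance from the root to `v`.  Leaves are the vertices with no
children; the taxon set `X` of the paper is the set `leaves` of leaves.
Every non-leaf, non-root vertex has out-degree (number of children) at least 2.
-/

noncomputable section

attribute [local instance] Classical.propDecidable

namespace PhyloTree

variable {V : Type} [Fintype V] [DecidableEq V]

/-- the PD score, inside the pendant subtree of `T` rooted at `w`, of a set
`Y` of leaves: the total length of all edges of that subtree whose set of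
descendant leaves meets `Y`. -/
def PDbelow (T : PhyloTree V) (w : V) (Y : Set V) : ℝ :=
  ∑ v : V, if v ≠ w ∧ T.anc w v ∧ ∃ x ∈ Y, T.IsLeaf x ∧ T.anc v x then T.len v else 0

/-- the leaves of the pendant subtree of `T` rooted at `w`. -/
def leavesBelow (T : PhyloTree V) (w : V) : Set V := {x | T.IsLeaf x ∧ T.anc w x}

/-- `φ_{T_w}(k)`: the minimum PD score of a size-`k` set of leaves of the
pendant subtree of `T` rooted at `w` (so `φ(0) = 0`, and `φ(k) = 0` on a
single-vertex subtree). -/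
def phiBelow (T : PhyloTree V) (w : V) (k : ℕ) : ℝ :=
  sInf {r | ∃ W : Set V, W ⊆ T.leavesBelow w ∧ W.ncard = k ∧ r = T.PDbelow w W}

end PhyloTree

/-!
The recursion holds at every vertex `w` with children `c i`. Each leaf strictly below `w` lies
below exactly one `c i`, so a leaf set `W` below `w` splits into the pieces `W ∩ X_i`, and its PD
score is the sum over `i` of the score of `W ∩ X_i` in `T_i`, plus `ℓ_i` when that piece is
non-empty. Taking `k_i = |W ∩ X_i|` bounds the score of every size-`k` set from below by a term of
the minimum; conversely, gluing together minimisers of sizes `k_i` in the `T_i` attains each term.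
Acyclicity comes from `hgt`, which strictly increases along every edge.
-/

open Set
open scoped Function

lemma sInf_eq_zero_of_subset_zero {s : Set ℝ} (h : s ⊆ {0}) : sInf s = 0 := by
  rcases subset_singleton_iff_eq.1 h with rfl | rfl
  · exact Real.sInf_empty
  · exact csInf_singleton 0

namespace PhyloTree

variable {V : Type} [Fintype V] [DecidableEq V] (T : PhyloTree V)

section Ancestry

variable {T}

lemma step_functional {a b b' : V} (h : T.step a b) (h' : T.step a b') : b = b' :=
  Option.some.inj (h.symm.trans h')

lemma hgt_lt_of_step {a b : V} (h : T.step a b) : T.hgt b < T.hgt a := by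
  have ha : a ≠ T.root := by
    rintro rfl
    simp [step, T.parent_root] at h
  linarith [T.hgt_eq a b h, T.len_pos a ha]

lemma hgt_le_of_anc {u v : V} (h : T.anc u v) : T.hgt u ≤ T.hgt v := by
  induction h with
  | refl => exact le_rfl
  | tail _ hstep ih => exact (hgt_lt_of_step hstep).le.trans ih

lemma anc_total {u v x : V} (hu : T.anc u x) (hv : T.anc v x) : T.anc u v ∨ T.anc v u := by
  induction hu using Relation.ReflTransGen.head_induction_on with
  | refl => exact Or.inr hv
  | head hstep hrest ih =>
    rcases hv.cases_head with rfl | ⟨y, hy, hv⟩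
    · exact Or.inl (Relation.ReflTransGen.head hstep hrest)
    · obtain rfl := step_functional hstep hy
      exact ih hv

lemma eq_root_of_anc_root {v : V} (h : T.anc v T.root) : v = T.root := by
  rcases h.cases_head with h | ⟨y, hy, -⟩
  · exact h.symm
  · simp [step, T.parent_root] at hy

lemma exists_child_anc {w v : V} (h : T.anc w v) (hv : v ≠ w) :
    ∃ u, T.parent u = some w ∧ T.anc u v := by
  induction h using Relation.ReflTransGen.head_induction_on with
  | refl => exact absurd rfl hv
  | @head v y hstep _ ih =>
    by_cases hyw : y = w
    · subst hyw
      exact ⟨v, hstep, Relation.ReflTransGen.refl⟩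
    · obtain ⟨u, hu, huy⟩ := ih hyw
      exact ⟨u, hu, Relation.ReflTransGen.head hstep huy⟩

lemma child_eq_of_anc {w u u' x : V} (hu : T.parent u = some w) (hu' : T.parent u' = some w)
    (h : T.anc u x) (h' : T.anc u' x) : u = u' := by
  have of_anc : ∀ {u u'}, T.parent u = some w → T.parent u' = some w → T.anc u u' → u = u' := by
    intro u u' hu hu' h
    rcases h.cases_head with h | ⟨y, hy, huw⟩
    · exact h.symm
    · obtain rfl : y = w := step_functional hy hu'
      exact absurd (hgt_le_of_anc huw) (hgt_lt_of_step hu).not_ge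
  rcases anc_total h h' with h | h
  · exact of_anc hu hu' h
  · exact (of_anc hu' hu h).symm

end Ancestry

lemma leavesBelow_subset_of_anc {u v : V} (h : T.anc u v) :
    T.leavesBelow v ⊆ T.leavesBelow u :=
  fun _ ⟨hx, hvx⟩ => ⟨hx, hvx.trans h⟩

lemma PDbelow_nonneg (w : V) (Y : Set V) : 0 ≤ T.PDbelow w Y := by
  refine Finset.sum_nonneg fun v _ => ?_
  split_ifs with h
  · refine (T.len_pos v fun hv => h.1 ?_).le
    subst hv
    exact (T.eq_root_of_anc_root h.2.1).symm
  · exact le_rfl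

lemma PDbelow_eq_zero_of_isLeaf {w : V} (hw : T.IsLeaf w) (Y : Set V) : T.PDbelow w Y = 0 :=
  Finset.sum_eq_zero fun _ _ => if_neg fun ⟨hvw, hwv, _⟩ =>
    let ⟨u, hu, _⟩ := T.exists_child_anc hwv hvw
    hw u hu

lemma PDbelow_inter_leavesBelow (w : V) (Y : Set V) :
    T.PDbelow w (Y ∩ T.leavesBelow w) = T.PDbelow w Y := by
  refine Finset.sum_congr rfl fun v _ => ?_
  congr 1
  exact propext ⟨fun ⟨hvw, hwv, x, hx, hxv⟩ => ⟨hvw, hwv, x, hx.1, hxv⟩,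
    fun ⟨hvw, hwv, x, hx, hxl, hvx⟩ => ⟨hvw, hwv, x, ⟨hx, hxl, hvx.trans hwv⟩, hxl, hvx⟩⟩

lemma phiBelow_le_PDbelow {w : V} {W : Set V} (hW : W ⊆ T.leavesBelow w) :
    T.phiBelow w W.ncard ≤ T.PDbelow w W :=
  csInf_le ⟨0, fun _ ⟨_, _, _, hr⟩ => hr ▸ T.PDbelow_nonneg _ _⟩ ⟨W, hW, rfl, rfl⟩

lemma exists_PDbelow_eq_phiBelow {w : V} {k : ℕ} (hk : k ≤ (T.leavesBelow w).ncard) :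
    ∃ W ⊆ T.leavesBelow w, W.ncard = k ∧ T.PDbelow w W = T.phiBelow w k := by
  let S := {r | ∃ W : Set V, W ⊆ T.leavesBelow w ∧ W.ncard = k ∧ r = T.PDbelow w W}
  have hne : S.Nonempty :=
    let ⟨W, hW, hcard⟩ := exists_subset_card_eq hk
    ⟨_, W, hW, hcard, rfl⟩
  have hfin : S.Finite :=
    (finite_range (T.PDbelow w)).subset fun _ ⟨W, _, _, hr⟩ => ⟨W, hr.symm⟩
  obtain ⟨W, hW, hcard, hr⟩ := hne.csInf_mem hfin
  exact ⟨W, hW, hcard, hr.symm⟩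

lemma phiBelow_eq_zero_of_isLeaf {w : V} (hw : T.IsLeaf w) (k : ℕ) : T.phiBelow w k = 0 :=
  sInf_eq_zero_of_subset_zero fun _ ⟨W, _, _, hr⟩ => hr.trans (T.PDbelow_eq_zero_of_isLeaf hw W)

def plantedPD (u : V) (Y : Set V) : ℝ :=
  ∑ v : V, if T.anc u v ∧ ∃ x ∈ Y, T.IsLeaf x ∧ T.anc v x then T.len v else 0

lemma plantedPD_eq (u : V) (Y : Set V) :
    T.plantedPD u Y = T.PDbelow u Y + if (Y ∩ T.leavesBelow u).Nonempty then T.len u else 0 := by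
  have hsplit : ∀ v, (if T.anc u v ∧ ∃ x ∈ Y, T.IsLeaf x ∧ T.anc v x then T.len v else 0) =
      (if v ≠ u ∧ T.anc u v ∧ ∃ x ∈ Y, T.IsLeaf x ∧ T.anc v x then T.len v else 0) +
        if v = u then (if (Y ∩ T.leavesBelow u).Nonempty then T.len u else 0) else 0 := by
    intro v
    by_cases hv : v = u
    · subst hv
      simp [anc, Set.Nonempty, leavesBelow, Relation.ReflTransGen.refl]
    · simp [hv]
  simp only [plantedPD, PDbelow, hsplit, Finset.sum_add_distrib, Finset.sum_ite_eq',
    Finset.mem_univ, if_true]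

section Children

variable {T} {w : V} {ι : Type*} {c : ι → V}

lemma parent_eq_of_mem_children (hch : {u | T.parent u = some w} = range c) (i : ι) :
    T.parent (c i) = some w :=
  show c i ∈ {u | T.parent u = some w} from hch ▸ mem_range_self i

lemma ne_and_anc_iff_exists_anc_child (hch : {u | T.parent u = some w} = range c) {v : V} :
    v ≠ w ∧ T.anc w v ↔ ∃ i, T.anc (c i) v := by
  constructor
  · rintro ⟨hvw, hwv⟩
    obtain ⟨u, hu, huv⟩ := T.exists_child_anc hwv hvw
    obtain ⟨i, rfl⟩ : u ∈ range c := hch ▸ hu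
    exact ⟨i, huv⟩
  · rintro ⟨i, hiv⟩
    have hwi : T.step (c i) w := parent_eq_of_mem_children hch i
    refine ⟨?_, hiv.trans (Relation.ReflTransGen.single hwi)⟩
    rintro rfl
    exact (hgt_le_of_anc hiv).not_gt (hgt_lt_of_step hwi)

lemma eq_of_anc_child (hinj : Function.Injective c) (hch : {u | T.parent u = some w} = range c)
    {i j : ι} {v : V} (hi : T.anc (c i) v) (hj : T.anc (c j) v) : i = j :=
  hinj <| T.child_eq_of_anc (parent_eq_of_mem_children hch i) (parent_eq_of_mem_children hch j)
    hi hj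

lemma pairwise_disjoint_leavesBelow (hinj : Function.Injective c)
    (hch : {u | T.parent u = some w} = range c) :
    Pairwise (Disjoint on fun i => T.leavesBelow (c i)) :=
  fun _ _ hij => disjoint_left.2 fun _ hi hj => hij (eq_of_anc_child hinj hch hi.2 hj.2)

lemma iUnion_inter_leavesBelow (hinj : Function.Injective c)
    (hch : {u | T.parent u = some w} = range c) {W : ι → Set V}
    (hW : ∀ i, W i ⊆ T.leavesBelow (c i)) (i : ι) :
    (⋃ j, W j) ∩ T.leavesBelow (c i) = W i := by
  refine subset_antisymm (fun x ⟨hx, hxi⟩ => ?_) fun x hx => ⟨mem_iUnion_of_mem i hx, hW i hx⟩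
  obtain ⟨j, hxj⟩ := mem_iUnion.1 hx
  obtain rfl : j = i := eq_of_anc_child hinj hch (hW j hxj).2 hxi.2
  exact hxj

variable [Fintype ι]

lemma ncard_eq_sum_ncard_inter_leavesBelow (hinj : Function.Injective c)
    (hch : {u | T.parent u = some w} = range c) (hw : ¬ T.IsLeaf w) {W : Set V}
    (hW : W ⊆ T.leavesBelow w) : W.ncard = ∑ i, (W ∩ T.leavesBelow (c i)).ncard := by
  have hcover : W = ⋃ i, W ∩ T.leavesBelow (c i) := by
    refine subset_antisymm (fun x hx => ?_) (iUnion_subset fun i => inter_subset_left)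
    obtain ⟨hxl, hwx⟩ := hW hx
    have hxw : x ≠ w := by
      rintro rfl
      exact hw hxl
    obtain ⟨i, hix⟩ := (ne_and_anc_iff_exists_anc_child hch).1 ⟨hxw, hwx⟩
    exact mem_iUnion.2 ⟨i, hx, hxl, hix⟩
  rw [← finsum_eq_sum_of_fintype, ← ncard_iUnion_of_finite (fun _ => toFinite _)
    ((pairwise_disjoint_leavesBelow hinj hch).mono fun _ _ h =>
      h.mono inter_subset_right inter_subset_right), ← hcover]

lemma PDbelow_eq_sum_plantedPD (hinj : Function.Injective c)
    (hch : {u | T.parent u = some w} = range c) (Y : Set V) :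
    T.PDbelow w Y = ∑ i, T.plantedPD (c i) Y := by
  unfold PDbelow plantedPD
  rw [Finset.sum_comm]
  refine Finset.sum_congr rfl fun v _ => ?_
  by_cases hv : ∃ i, T.anc (c i) v
  · obtain ⟨i, hiv⟩ := hv
    rw [Finset.sum_eq_single i
      (fun j _ hji => if_neg fun h => hji (eq_of_anc_child hinj hch h.1 hiv)) (by simp)]
    obtain ⟨hvw, hwv⟩ := (ne_and_anc_iff_exists_anc_child hch).2 ⟨i, hiv⟩
    congr 1
    exact propext ⟨fun h => ⟨hiv, h.2.2⟩, fun h => ⟨hvw, hwv, h.2⟩⟩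
  · rw [if_neg fun h => hv ((ne_and_anc_iff_exists_anc_child hch).1 ⟨h.1, h.2.1⟩)]
    exact (Finset.sum_eq_zero fun i _ => if_neg fun h => hv ⟨i, h.1⟩).symm

lemma exists_sum_le_PDbelow (hinj : Function.Injective c)
    (hch : {u | T.parent u = some w} = range c) (hw : ¬ T.IsLeaf w) {W : Set V}
    (hW : W ⊆ T.leavesBelow w) :
    ∃ κ : ι → ℕ, ∑ i, κ i = W.ncard ∧ (∀ i, κ i ≤ (T.leavesBelow (c i)).ncard) ∧
      ∑ i, (T.phiBelow (c i) (κ i) + if 0 < κ i then T.len (c i) else 0) ≤ T.PDbelow w W := by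
  refine ⟨fun i => (W ∩ T.leavesBelow (c i)).ncard,
    (ncard_eq_sum_ncard_inter_leavesBelow hinj hch hw hW).symm,
    fun i => ncard_le_ncard inter_subset_right, ?_⟩
  rw [PDbelow_eq_sum_plantedPD hinj hch]
  refine Finset.sum_le_sum fun i _ => ?_
  rw [plantedPD_eq, ← PDbelow_inter_leavesBelow]
  simp only [ncard_pos (toFinite _)]
  exact add_le_add_left (T.phiBelow_le_PDbelow inter_subset_right) _

lemma exists_PDbelow_eq_sum (hinj : Function.Injective c)
    (hch : {u | T.parent u = some w} = range c) {κ : ι → ℕ}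
    (hκ : ∀ i, κ i ≤ (T.leavesBelow (c i)).ncard) :
    ∃ W ⊆ T.leavesBelow w, W.ncard = ∑ i, κ i ∧
      T.PDbelow w W = ∑ i, (T.phiBelow (c i) (κ i) + if 0 < κ i then T.len (c i) else 0) := by
  choose W hWsub hWcard hWphi using fun i => T.exists_PDbelow_eq_phiBelow (hκ i)
  refine ⟨⋃ i, W i, iUnion_subset fun i => (hWsub i).trans
    (T.leavesBelow_subset_of_anc (.single (parent_eq_of_mem_children hch i))), ?_, ?_⟩
  · rw [ncard_iUnion_of_finite (fun _ => toFinite _)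
      ((pairwise_disjoint_leavesBelow hinj hch).mono fun i j h => h.mono (hWsub i) (hWsub j)),
      finsum_eq_sum_of_fintype]
    exact Finset.sum_congr rfl fun i _ => hWcard i
  · rw [PDbelow_eq_sum_plantedPD hinj hch]
    refine Finset.sum_congr rfl fun i _ => ?_
    rw [plantedPD_eq, ← PDbelow_inter_leavesBelow, iUnion_inter_leavesBelow hinj hch hWsub,
      hWphi, ← hWcard i]
    simp only [ncard_pos (toFinite _)]

theorem phiBelow_eq_sInf_children (hinj : Function.Injective c)
    (hch : {u | T.parent u = some w} = range c) (k : ℕ) :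
    T.phiBelow w k = sInf {r | ∃ κ : ι → ℕ, (∑ i, κ i) = k ∧
        (∀ i, κ i ≤ (T.leavesBelow (c i)).ncard) ∧
        r = ∑ i, (T.phiBelow (c i) (κ i) + if 0 < κ i then T.len (c i) else 0)} := by
  by_cases hw : T.IsLeaf w
  · have : IsEmpty ι := ⟨fun i => hw (c i) (parent_eq_of_mem_children hch i)⟩
    rw [T.phiBelow_eq_zero_of_isLeaf hw, eq_comm]
    refine sInf_eq_zero_of_subset_zero ?_
    rintro _ ⟨κ, -, -, rfl⟩
    simp
  · apply csInf_eq_csInf_of_forall_exists_le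
    · rintro _ ⟨W, hW, rfl, rfl⟩
      obtain ⟨κ, hsum, hκ, hle⟩ := exists_sum_le_PDbelow hinj hch hw hW
      exact ⟨_, ⟨κ, hsum, hκ, rfl⟩, hle⟩
    · rintro _ ⟨κ, rfl, hκ, rfl⟩
      obtain ⟨W, hW, hcard, hPD⟩ := exists_PDbelow_eq_sum hinj hch hκ
      exact ⟨_, ⟨W, hW, hcard, rfl⟩, hPD.le⟩

end Children

end PhyloTree

theorem minPD_dynamic_programming_general
    {V : Type} [Fintype V] [DecidableEq V] (T : PhyloTree V)
    (t : ℕ) (c : Fin t → V) (hinj : Function.Injective c)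
    (hch : {u | T.parent u = some T.root} = Set.range c)
    (k : ℕ) :
    T.phiBelow T.root k =
      sInf {r | ∃ κ : Fin t → ℕ, (∑ i, κ i) = k ∧
        (∀ i, κ i ≤ (T.leavesBelow (c i)).ncard) ∧
        r = ∑ i, (T.phiBelow (c i) (κ i) + if 0 < κ i then T.len (c i) else 0)} :=
  T.phiBelow_eq_sInf_children hinj hch k

/-- Eqn (4) of the paper.  Let `T` be a rooted phylogenetic
tree whose root has out-degree `t`, with children `c 0, …, c (t-1)` (so the
root edges have lengths `len (c i)` and the pendant subtrees `T_i` are rooted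
at the `c i`).  Then for all `1 ≤ k ≤ |X|`,
`φ_T(k) = min { Σ_i (φ_{T_i}(k_i) + ℓ_i·𝟙_{k_i>0}) : k₁ + ⋯ + k_t = k }`. -/
theorem minPD_dynamic_programming
    {V : Type} [Fintype V] [DecidableEq V] (T : PhyloTree V)
    (t : ℕ) (c : Fin t → V) (hinj : Function.Injective c)
    (hch : {u | T.parent u = some T.root} = Set.range c)
    (k : ℕ) (hk : 1 ≤ k) (hkn : k ≤ T.leaves.ncard) :
    T.phiBelow T.root k =
      sInf {r | ∃ κ : Fin t → ℕ, (∑ i, κ i) = k ∧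
        (∀ i, κ i ≤ (T.leavesBelow (c i)).ncard) ∧
        r = ∑ i, (T.phiBelow (c i) (κ i) + if 0 < κ i then T.len (c i) else 0)} :=
  minPD_dynamic_programming_general T t c hinj hch k
end
end
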